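/- arXiv:2105.05072 — 4 statements merged into one kernel-verified Lean document; each statement's English description precedes it below -/
import Mathlib

section
/- The empty network with fully ignorant agents fails to be pairwise stable if and only if either (i) c_H > δ and there exist agents i, j with min{π_i, π_j} ≥ (c_H - δ)/(c_H - c_L), or (ii) c_H ≤ δ. -/
/-- The empty network with fully ignorant agents fails to be pairwise
stable iff either (i) `c_H > δ` and some pair of agents `i ≠ j` has
`min{π_i, π_j} ≥ (c_H - δ)/(c_H - c_L)`, or (ii) `c_H ≤ δ`.
Pairwise stability of the empty network means: for no pair `i ≠ j` are both
expected incremental utilities non-negative. -/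
theorem stmt4 {N : Type*} (π : N → N → ℝ) (δ cL cH : ℝ)
    (hδ0 : 0 < δ) (hδ1 : δ < 1) (hcL : 0 < cL) (hc : cL < cH)
    (hπ : ∀ i j : N, π i j ∈ Set.Icc (0 : ℝ) 1)
    (hN : ∃ i j : N, i ≠ j) :
    (¬ ∀ i j : N, i ≠ j →
        ¬ (0 ≤ δ - π i j * cL - (1 - π i j) * cH ∧
           0 ≤ δ - π j i * cL - (1 - π j i) * cH)) ↔
      ((cH > δ ∧ ∃ i j : N, i ≠ j ∧
          (cH - δ) / (cH - cL) ≤ min (π i j) (π j i)) ∨ cH ≤ δ) := by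
  have hdc : (0:ℝ) < cH - cL := by linarith
  have key : ∀ p : ℝ, (0 ≤ δ - p * cL - (1 - p) * cH) ↔ (cH - δ) / (cH - cL) ≤ p := by
    intro p
    rw [div_le_iff₀ hdc]
    constructor <;> intro h <;> nlinarith
  constructor
  · intro h
    push_neg at h
    obtain ⟨i, j, hij, h1, h2⟩ := h
    rcases le_or_gt cH δ with hle | hgt
    · exact Or.inr hle
    · exact Or.inl ⟨hgt, i, j, hij, le_min ((key _).mp h1) ((key _).mp h2)⟩
  · intro h hstab
    rcases h with ⟨hgt, i, j, hij, hmin⟩ | hle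
    · exact hstab i j hij ⟨(key _).mpr (hmin.trans (min_le_left _ _)),
        (key _).mpr (hmin.trans (min_le_right _ _))⟩
    · obtain ⟨i, j, hij⟩ := hN
      refine hstab i j hij ⟨(key _).mpr ?_, (key _).mpr ?_⟩ <;>
      · refine le_trans ?_ (hπ _ _).1
        apply div_nonpos_of_nonpos_of_nonneg <;> linarith
end

section
/- If c_L ≤ δ - δ² with 0 < c_L < c_H and 0 < δ < 1, then under complete information any two same-type agents gain non-negative incremental utility from linking (at least δ - δ² - c_L ≥ 0); hence any network containing a singleton agent whose type is shared by some other agent cannot be pairwise stable under complete information. -/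
open Finset

open Classical in
/-- Benefit from the network: `Σ_{j ≠ i, reachable} δ^{dist(i,j)}`. -/
noncomputable def benefit {n : ℕ} (δ : ℝ) (g : SimpleGraph (Fin n)) (i : Fin n) : ℝ :=
  ∑ j : Fin n, if j ≠ i ∧ g.Reachable i j then δ ^ g.dist i j else 0

open Classical in
/-- Insider-outsider link cost. -/
noncomputable def cost {n : ℕ} {T : Type} (cL cH : ℝ) (t : Fin n → T) (i j : Fin n) : ℝ :=
  if t i = t j then cL else cH

open Classical in
/-- Actual utility: benefits less costs of direct links. -/
noncomputable def utility {n : ℕ} {T : Type} (δ cL cH : ℝ) (t : Fin n → T)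
    (g : SimpleGraph (Fin n)) (i : Fin n) : ℝ :=
  benefit δ g i - ∑ j : Fin n, if g.Adj i j then cost cL cH t i j else 0

/-- The graph `g` with the (undirected) edge `ij` added. -/
def addE {n : ℕ} (g : SimpleGraph (Fin n)) (i j : Fin n) : SimpleGraph (Fin n) :=
  g ⊔ SimpleGraph.fromEdgeSet {s(i, j)}

/-- The graph `g` with the edge `ij` deleted. -/
def delE {n : ℕ} (g : SimpleGraph (Fin n)) (i j : Fin n) : SimpleGraph (Fin n) :=
  g.deleteEdges {s(i, j)}

/-- Actual incremental utility to `i` of adding the link `ij`. -/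
noncomputable def actualGain {n : ℕ} {T : Type} (δ cL cH : ℝ) (t : Fin n → T)
    (g : SimpleGraph (Fin n)) (i j : Fin n) : ℝ :=
  utility δ cL cH t (addE g i j) i - utility δ cL cH t g i

/-- Expected incremental utility to `i` of adding the link `ij`, given belief
`π i j` that `j` shares `i`'s type: incremental benefit less expected cost. -/
noncomputable def expGain {n : ℕ} (δ cL cH : ℝ) (π : Fin n → Fin n → ℝ)
    (g : SimpleGraph (Fin n)) (i j : Fin n) : ℝ :=
  (benefit δ (addE g i j) i - benefit δ g i) - (π i j * cL + (1 - π i j) * cH)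

/-- Pairwise stability under complete information. -/
def completePS {n : ℕ} {T : Type} (δ cL cH : ℝ) (t : Fin n → T)
    (g : SimpleGraph (Fin n)) : Prop :=
  (∀ i j, g.Adj i j → utility δ cL cH t (delE g i j) i ≤ utility δ cL cH t g i) ∧
  (∀ i j, i ≠ j → ¬ g.Adj i j →
      0 ≤ actualGain δ cL cH t g i j → actualGain δ cL cH t g j i < 0)

/-- Pairwise stability under incomplete information, where `M i j` means `i` knows
`j`'s type: unacquainted pairs use expected gains, acquainted pairs actual gains. -/
def incompletePS {n : ℕ} {T : Type} (δ cL cH : ℝ) (t : Fin n → T)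
    (π : Fin n → Fin n → ℝ) (M : Fin n → Fin n → Prop)
    (g : SimpleGraph (Fin n)) : Prop :=
  (∀ i j, g.Adj i j → utility δ cL cH t (delE g i j) i ≤ utility δ cL cH t g i) ∧
  (∀ i j, i ≠ j → ¬ g.Adj i j → ¬ M i j →
      0 ≤ expGain δ cL cH π g i j → expGain δ cL cH π g j i < 0) ∧
  (∀ i j, i ≠ j → ¬ g.Adj i j → M i j →
      0 ≤ actualGain δ cL cH t g i j → actualGain δ cL cH t g j i < 0)

section work
open SimpleGraph

variable {n : ℕ} {T : Type}

lemma addE_le {n : ℕ} (g : SimpleGraph (Fin n)) (i j : Fin n) : g ≤ addE g i j :=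
  le_sup_left

lemma dist_addE_le (g : SimpleGraph (Fin n)) {i j a b : Fin n}
    (h : g.Reachable a b) : (addE g i j).dist a b ≤ g.dist a b := by
  obtain ⟨p, hp⟩ := h.exists_walk_length_eq_dist
  calc (addE g i j).dist a b ≤ (p.mapLe (addE_le g i j)).length := SimpleGraph.dist_le _
    _ = g.dist a b := by simp [hp]

lemma addE_adj_self {g : SimpleGraph (Fin n)} {i j : Fin n} (hij : i ≠ j) :
    (addE g i j).Adj i j := by
  right
  simp [SimpleGraph.fromEdgeSet_adj, hij]

lemma benefit_gain (g : SimpleGraph (Fin n)) {i j : Fin n} (hij : i ≠ j)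
    (hadj : ¬ g.Adj i j) {δ : ℝ} (hδ0 : 0 < δ) (hδ1 : δ < 1) :
    δ - δ ^ 2 ≤ benefit δ (addE g i j) i - benefit δ g i := by
  classical
  unfold benefit
  rw [← Finset.sum_sub_distrib]
  set f : Fin n → ℝ := fun k =>
    (if k ≠ i ∧ (addE g i j).Reachable i k then δ ^ (addE g i j).dist i k else 0) -
    (if k ≠ i ∧ g.Reachable i k then δ ^ g.dist i k else 0) with hf
  have hnonneg : ∀ k ∈ Finset.univ, 0 ≤ f k := by
    intro k _
    simp only [hf]
    by_cases h : k ≠ i ∧ g.Reachable i k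
    · have hr : (addE g i j).Reachable i k := h.2.mono (addE_le g i j)
      rw [if_pos h, if_pos ⟨h.1, hr⟩]
      have := dist_addE_le g (i := i) (j := j) h.2
      have := pow_le_pow_of_le_one hδ0.le hδ1.le this
      linarith
    · rw [if_neg h]
      split
      · rw [sub_zero]; exact le_of_lt (pow_pos hδ0 _)
      · simp
  have hj : δ - δ ^ 2 ≤ f j := by
    simp only [hf]
    have hadj' : (addE g i j).Adj i j := addE_adj_self hij
    have hd1 : (addE g i j).dist i j = 1 := SimpleGraph.dist_eq_one_iff_adj.mpr hadj'
    rw [if_pos ⟨hij.symm, hadj'.reachable⟩, hd1, pow_one]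
    by_cases h : j ≠ i ∧ g.Reachable i j
    · rw [if_pos h]
      have h2 : 2 ≤ g.dist i j := by
        rcases Nat.lt_or_ge (g.dist i j) 2 with hlt | hge
        · interval_cases hd : (g.dist i j)
          · exact absurd (SimpleGraph.Reachable.pos_dist_of_ne h.2 hij) (by omega)
          · exact absurd (SimpleGraph.dist_eq_one_iff_adj.mp hd) hadj
        · exact hge
      have := pow_le_pow_of_le_one hδ0.le hδ1.le h2
      linarith
    · rw [if_neg h]
      nlinarith
  calc δ - δ ^ 2 ≤ f j := hj
    _ ≤ ∑ k, f k := Finset.single_le_sum hnonneg (Finset.mem_univ j)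

open Classical in
lemma cost_gain {T : Type} (g : SimpleGraph (Fin n)) {i j : Fin n} (hij : i ≠ j)
    (hadj : ¬ g.Adj i j) (cL cH : ℝ) (t : Fin n → T) (ht : t i = t j) :
    (∑ k : Fin n, if (addE g i j).Adj i k then cost cL cH t i k else 0)
      = (∑ k : Fin n, if g.Adj i k then cost cL cH t i k else 0) + cL := by
  classical
  have : ∀ k : Fin n, (if (addE g i j).Adj i k then cost cL cH t i k else 0)
      = (if g.Adj i k then cost cL cH t i k else 0) + (if k = j then cL else 0) := by
    intro k
    by_cases hkj : k = j
    · subst hkj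
      rw [if_pos (addE_adj_self hij), if_neg hadj, if_pos rfl]
      simp [cost, ht]
    · have heq : (addE g i j).Adj i k ↔ g.Adj i k := by
        simp [addE, SimpleGraph.fromEdgeSet_adj, Sym2.eq_iff, hkj, hij]
      rw [if_congr heq rfl rfl, if_neg hkj, add_zero]
  rw [Finset.sum_congr rfl (fun k _ => this k), Finset.sum_add_distrib]
  simp

end work

/-- If `c_L ≤ δ - δ²`, then under complete information any two
unlinked same-type agents gain at least `δ - δ² - c_L ≥ 0` from linking; hence any
network containing a singleton agent whose type is shared by some other agent
cannot be pairwise stable under complete information. -/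
theorem stmt6 {n : ℕ} {T : Type} (t : Fin n → T) (δ cL cH : ℝ)
    (hδ0 : 0 < δ) (hδ1 : δ < 1) (hcL : 0 < cL) (hc : cL < cH)
    (hL : cL ≤ δ - δ ^ 2) :
    (0 ≤ δ - δ ^ 2 - cL) ∧
    (∀ (g : SimpleGraph (Fin n)) (i j : Fin n), i ≠ j → ¬ g.Adj i j → t i = t j →
        δ - δ ^ 2 - cL ≤ actualGain δ cL cH t g i j) ∧
    (∀ (g : SimpleGraph (Fin n)) (i : Fin n), (∀ k, ¬ g.Adj i k) →
        (∃ j, j ≠ i ∧ t j = t i) → ¬ completePS δ cL cH t g) := by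
  have h0 : 0 ≤ δ - δ ^ 2 - cL := by linarith
  have hgain : ∀ (g : SimpleGraph (Fin n)) (i j : Fin n), i ≠ j → ¬ g.Adj i j → t i = t j →
      δ - δ ^ 2 - cL ≤ actualGain δ cL cH t g i j := by
    intro g i j hij hadj ht
    have hb := benefit_gain g hij hadj hδ0 hδ1
    have hcost := cost_gain g hij hadj cL cH t ht
    unfold actualGain utility
    rw [hcost]
    ring_nf
    ring_nf at hb
    linarith
  refine ⟨h0, hgain, ?_⟩
  rintro g i hsing ⟨j, hji, htj⟩ ⟨_, hPS⟩
  have hadj : ¬ g.Adj i j := hsing j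
  have hadj' : ¬ g.Adj j i := fun h => hsing j h.symm
  have h1 : 0 ≤ actualGain δ cL cH t g i j := le_trans h0 (hgain g i j hji.symm hadj htj.symm)
  have h2 := hPS i j hji.symm hadj h1
  have h3 : 0 ≤ actualGain δ cL cH t g j i := le_trans h0 (hgain g j i hji hadj' htj)
  linarith
end

section
/- Let all n agents share one hidden type but be partitioned into social groups N^1,…,N^K, and let c_L ≤ δ - δ². If for all same-group pairs π_i(s_j) ≥ (c_H - (δ - δ²))/(c_H - c_L) and for all cross-group pairs (with target group of size n_s) π_i(s_j) < (c_H - (δ + (n_s - 1)δ²))/(c_H - c_L), then starting from the empty network the resulting pairwise stable equilibrium consists of K complete components, one per social group, and this network is not efficient (the efficient network connects all agents of the same type). -/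
open Finset

/-- Size of social group `k`. -/
noncomputable def groupSize {n K : ℕ} (s : Fin n → Fin K) (k : Fin K) : ℕ :=
  (Finset.univ.filter fun a => s a = k).card



open SimpleGraph in
private lemma gAdj' {n K : ℕ} (s : Fin n → Fin K) {i j : Fin n} :
    (SimpleGraph.fromRel fun a b => s a = s b).Adj i j ↔ i ≠ j ∧ s i = s j := by
  simp only [SimpleGraph.fromRel_adj]
  constructor
  · rintro ⟨h, h1 | h1⟩ <;> exact ⟨h, by omega⟩
  · exact fun ⟨h1, h2⟩ => ⟨h1, Or.inl h2⟩

open SimpleGraph in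
private lemma gReach {n K : ℕ} (s : Fin n → Fin K) {i j : Fin n} :
    (SimpleGraph.fromRel fun a b => s a = s b).Reachable i j ↔ s i = s j := by
  constructor
  · rintro ⟨w⟩
    induction w with
    | nil => rfl
    | cons h _ ih =>
      rcases ((gAdj' s).mp h) with ⟨_, h2⟩
      exact h2.trans ih
  · intro h
    by_cases hij : i = j
    · subst hij; exact SimpleGraph.Reachable.refl i
    · exact ((gAdj' s).mpr ⟨hij, h⟩).reachable

open SimpleGraph in
private lemma addE_adj {n K : ℕ} (s : Fin n → Fin K) {i j v w : Fin n} :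
    (addE (SimpleGraph.fromRel fun a b => s a = s b) i j).Adj v w ↔
      (v ≠ w ∧ s v = s w) ∨ (v ≠ w ∧ ((v = i ∧ w = j) ∨ (v = j ∧ w = i))) := by
  unfold addE
  simp only [SimpleGraph.sup_adj, SimpleGraph.fromEdgeSet_adj, Set.mem_singleton_iff,
    Sym2.eq_iff, gAdj' s]
  constructor
  · rintro (⟨h1, h2⟩ | ⟨h1, h2⟩)
    · exact Or.inl ⟨h1, h2⟩
    · exact Or.inr ⟨fun hvw => h2 hvw, h1⟩
  · rintro (⟨h1, h2⟩ | ⟨h1, h2⟩)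
    · exact Or.inl ⟨h1, h2⟩
    · exact Or.inr ⟨h2, h1⟩

open SimpleGraph in
private lemma delE_adj {n K : ℕ} (s : Fin n → Fin K) {i j v w : Fin n} :
    (delE (SimpleGraph.fromRel fun a b => s a = s b) i j).Adj v w ↔
      (v ≠ w ∧ s v = s w) ∧ ¬((v = i ∧ w = j) ∨ (v = j ∧ w = i)) := by
  unfold delE
  simp only [SimpleGraph.deleteEdges_adj, Set.mem_singleton_iff, Sym2.eq_iff, gAdj' s]

open SimpleGraph in
private lemma addE_walk_prop {n K : ℕ} (s : Fin n → Fin K) {i j : Fin n} :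
    ∀ {u v : Fin n},
      (addE (SimpleGraph.fromRel fun a b => s a = s b) i j).Walk u v →
      (s u = s i ∨ s u = s j) → (s v = s i ∨ s v = s j) := by
  intro u v w
  induction w with
  | nil => exact id
  | cons h _ ih =>
    intro hu
    apply ih
    rcases (addE_adj s).mp h with ⟨_, h2⟩ | ⟨_, ⟨h1, h2⟩ | ⟨h1, h2⟩⟩
    · rcases hu with hu | hu
      · exact Or.inl (h2.symm.trans hu)
      · exact Or.inr (h2.symm.trans hu)
    · exact Or.inr (by rw [h2])
    · exact Or.inl (by rw [h2])

/-- The set of same-group companions of `i`. -/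
private def Sset {n K : ℕ} (s : Fin n → Fin K) (i : Fin n) : Finset (Fin n) :=
  Finset.univ.filter fun v => v ≠ i ∧ s v = s i

private lemma mem_Sset {n K : ℕ} (s : Fin n → Fin K) {i v : Fin n} :
    v ∈ Sset s i ↔ v ≠ i ∧ s v = s i := by simp [Sset]

private lemma groupSize_eq_S {n K : ℕ} (s : Fin n → Fin K) (i : Fin n) :
    groupSize s (s i) = (Sset s i).card + 1 := by
  unfold groupSize
  rw [← Finset.card_erase_add_one
    (show i ∈ Finset.univ.filter (fun a => s a = s i) by simp)]
  have : (Finset.univ.filter fun a => s a = s i).erase i = Sset s i := by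
    ext v
    simp [Sset, Finset.mem_erase, and_comm]
  rw [this]

open Classical in
private lemma benefit_eval {n : ℕ} (δ : ℝ) (g : SimpleGraph (Fin n)) (i : Fin n)
    (A : Finset (Fin n)) (c : ℝ)
    (h : ∀ v : Fin n, (if v ≠ i ∧ g.Reachable i v then δ ^ g.dist i v else 0) =
      if v ∈ A then c else 0) :
    benefit δ g i = A.card * c := by
  unfold benefit
  rw [Finset.sum_congr rfl fun v _ => h v, Finset.sum_ite_mem,
    Finset.univ_inter, Finset.sum_const, nsmul_eq_mul]

open Classical in
private lemma benefit_le_sum {n : ℕ} (δ : ℝ) (g : SimpleGraph (Fin n)) (i : Fin n)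
    (b : Fin n → ℝ)
    (h : ∀ v : Fin n, (if v ≠ i ∧ g.Reachable i v then δ ^ g.dist i v else 0) ≤ b v) :
    benefit δ g i ≤ ∑ v : Fin n, b v :=
  Finset.sum_le_sum fun v _ => h v

open Classical in
private lemma costsum_eval {n : ℕ} {T : Type} (cL cH : ℝ) (t : Fin n → T)
    (g : SimpleGraph (Fin n)) (i : Fin n) (A : Finset (Fin n)) (c : ℝ)
    (h : ∀ v : Fin n, (if g.Adj i v then cost cL cH t i v else 0) =
      if v ∈ A then c else 0) :
    (∑ j : Fin n, if g.Adj i j then cost cL cH t i j else 0) = A.card * c := by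
  rw [Finset.sum_congr rfl fun v _ => h v, Finset.sum_ite_mem,
    Finset.univ_inter, Finset.sum_const, nsmul_eq_mul]

private lemma cost_const {n : ℕ} (cL cH : ℝ) (i j : Fin n) :
    cost cL cH (fun _ => ()) i j = cL := by
  unfold cost; simp

open SimpleGraph in
private lemma benefit_g {n K : ℕ} (s : Fin n → Fin K) (δ : ℝ) (hδ0 : 0 < δ) (i : Fin n) :
    benefit δ (SimpleGraph.fromRel fun a b => s a = s b) i =
      (Sset s i).card * δ := by
  apply benefit_eval
  intro v
  by_cases hv : v ∈ Sset s i
  · have hv' := (mem_Sset s).mp hv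
    have hadj : (SimpleGraph.fromRel fun a b => s a = s b).Adj i v :=
      (gAdj' s).mpr ⟨fun h => hv'.1 h.symm, hv'.2.symm⟩
    rw [if_pos ⟨hv'.1, hadj.reachable⟩, if_pos hv,
      (SimpleGraph.dist_eq_one_iff_adj).mpr hadj, pow_one]
  · rw [if_neg, if_neg hv]
    rintro ⟨h1, h2⟩
    exact hv ((mem_Sset s).mpr ⟨h1, ((gReach s).mp h2).symm⟩)

open SimpleGraph in
private lemma utility_g {n K : ℕ} (s : Fin n → Fin K) (δ cL cH : ℝ) (hδ0 : 0 < δ)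
    (i : Fin n) :
    utility δ cL cH (fun _ => ()) (SimpleGraph.fromRel fun a b => s a = s b) i =
      (Sset s i).card * (δ - cL) := by
  unfold utility
  rw [benefit_g s δ hδ0 i,
    costsum_eval cL cH (fun _ => ()) _ i (Sset s i) cL (by
      intro v
      rw [cost_const]
      by_cases hv : v ∈ Sset s i
      · have hv' := (mem_Sset s).mp hv
        rw [if_pos ((gAdj' s).mpr ⟨fun h => hv'.1 h.symm, hv'.2.symm⟩), if_pos hv]
      · rw [if_neg, if_neg hv]
        intro hadj
        rcases (gAdj' s).mp hadj with ⟨h1, h2⟩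
        exact hv ((mem_Sset s).mpr ⟨fun h => h1 h.symm, h2.symm⟩))]
  ring

open SimpleGraph in
private lemma utility_top {n : ℕ} (δ cL cH : ℝ) (i : Fin n) :
    utility δ cL cH (fun _ => ()) (⊤ : SimpleGraph (Fin n)) i =
      ((Finset.univ.filter fun v => v ≠ i).card : ℝ) * (δ - cL) := by
  unfold utility
  rw [benefit_eval δ ⊤ i (Finset.univ.filter fun v => v ≠ i) δ (by
      intro v
      by_cases hv : v = i
      · subst hv; simp
      · have hadj : (⊤ : SimpleGraph (Fin n)).Adj i v := fun h => hv h.symm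
        rw [if_pos ⟨hv, hadj.reachable⟩, if_pos (by simp [hv]),
          (SimpleGraph.dist_eq_one_iff_adj).mpr hadj, pow_one]),
    costsum_eval cL cH (fun _ => ()) ⊤ i (Finset.univ.filter fun v => v ≠ i) cL (by
      intro v
      rw [cost_const]
      by_cases hv : v = i
      · subst hv; simp
      · rw [if_pos (show (⊤ : SimpleGraph (Fin n)).Adj i v from fun h => hv h.symm),
          if_pos (by simp [hv])])]
  ring


open SimpleGraph in
private lemma utility_delE_le {n K : ℕ} (s : Fin n → Fin K) (δ cL cH : ℝ)
    (hδ0 : 0 < δ) (hδ1 : δ < 1) {i j : Fin n} (hij : i ≠ j) (hs : s i = s j) :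
    utility δ cL cH (fun _ => ())
        (delE (SimpleGraph.fromRel fun a b => s a = s b) i j) i ≤
      (((Sset s i).erase j).card : ℝ) * (δ - cL) + δ ^ 2 := by
  classical
  set g' := delE (SimpleGraph.fromRel fun a b => s a = s b) i j with hg'
  have hb : benefit δ g' i ≤ ∑ v : Fin n,
      ((if v = j then δ ^ 2 else 0) + (if v ∈ (Sset s i).erase j then δ else 0)) := by
    apply benefit_le_sum
    intro v
    have hnn : (0:ℝ) ≤ (if v = j then δ ^ 2 else 0) +
        (if v ∈ (Sset s i).erase j then δ else 0) := by
      have := sq_nonneg δ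
      split_ifs <;> simp_all <;> positivity
    by_cases hcond : v ≠ i ∧ g'.Reachable i v
    · obtain ⟨hvi, hreach⟩ := hcond
      rw [if_pos ⟨hvi, hreach⟩]
      by_cases hvj : v = j
      · subst hvj
        have hnadj : ¬ g'.Adj i v := by
          rw [hg', delE_adj s]
          rintro ⟨_, h2⟩
          exact h2 (Or.inl ⟨rfl, rfl⟩)
        have h0 : 0 < g'.dist i v := hreach.pos_dist_of_ne (fun h => hvi h.symm)
        have h1 : g'.dist i v ≠ 1 := fun h =>
          hnadj ((SimpleGraph.dist_eq_one_iff_adj).mp h)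
        have h2 : 2 ≤ g'.dist i v := by omega
        have hle2 : δ ^ g'.dist i v ≤ δ ^ 2 :=
          pow_le_pow_of_le_one hδ0.le hδ1.le h2
        have hnn2 : (0:ℝ) ≤ if v ∈ (Sset s i).erase v then δ else 0 := by
          split_ifs <;> positivity
        rw [if_pos rfl]
        linarith
      · have hreachg : (SimpleGraph.fromRel fun a b => s a = s b).Reachable i v :=
          hreach.mono (SimpleGraph.deleteEdges_le _)
        have hsv : s v = s i := ((gReach s).mp hreachg).symm
        have hmem : v ∈ (Sset s i).erase j :=
          Finset.mem_erase.mpr ⟨hvj, (mem_Sset s).mpr ⟨hvi, hsv⟩⟩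
        have h0 : 0 < g'.dist i v := hreach.pos_dist_of_ne (fun h => hvi h.symm)
        have : δ ^ g'.dist i v ≤ δ ^ 1 :=
          pow_le_pow_of_le_one hδ0.le hδ1.le h0
        rw [if_neg hvj, if_pos hmem, pow_one] at *
        linarith
    · rw [if_neg hcond]; exact hnn
  have hc : (∑ v : Fin n, if g'.Adj i v then cost cL cH (fun _ => ()) i v else 0) =
      (((Sset s i).erase j).card : ℝ) * cL := by
    apply costsum_eval
    intro v
    rw [cost_const]
    by_cases hv : v ∈ (Sset s i).erase j
    · obtain ⟨hvj, hvS⟩ := Finset.mem_erase.mp hv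
      obtain ⟨hvi, hsv⟩ := (mem_Sset s).mp hvS
      rw [if_pos, if_pos hv]
      rw [hg', delE_adj s]
      refine ⟨⟨fun h => hvi h.symm, hsv.symm⟩, ?_⟩
      rintro (⟨_, h2⟩ | ⟨h1, _⟩)
      · exact hvj h2
      · exact hij h1
    · rw [if_neg, if_neg hv]
      intro hadj
      rw [hg', delE_adj s] at hadj
      obtain ⟨⟨h1, h2⟩, h3⟩ := hadj
      refine hv (Finset.mem_erase.mpr ⟨?_, (mem_Sset s).mpr ⟨fun h => h1 h.symm, h2.symm⟩⟩)
      intro h; exact h3 (Or.inl ⟨rfl, h⟩)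
  have hsum : (∑ v : Fin n,
      ((if v = j then δ ^ 2 else 0) + (if v ∈ (Sset s i).erase j then δ else 0))) =
      δ ^ 2 + (((Sset s i).erase j).card : ℝ) * δ := by
    rw [Finset.sum_add_distrib, Finset.sum_ite_eq' Finset.univ j (fun _ => δ ^ 2),
      if_pos (Finset.mem_univ j), Finset.sum_ite_mem, Finset.univ_inter,
      Finset.sum_const, nsmul_eq_mul]
  unfold utility
  rw [hc]
  have := hb.trans_eq hsum
  linarith

open SimpleGraph in
private lemma expGain_neg {n K : ℕ} (s : Fin n → Fin K) (δ cL cH : ℝ)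
    (π : Fin n → Fin n → ℝ) (hδ0 : 0 < δ) (hδ1 : δ < 1) (hc : cL < cH)
    {i j : Fin n} (hss : s i ≠ s j)
    (hcross : π i j < (cH - (δ + ((groupSize s (s j) : ℝ) - 1) * δ ^ 2)) / (cH - cL)) :
    expGain δ cL cH π (SimpleGraph.fromRel fun a b => s a = s b) i j < 0 := by
  classical
  have hij : i ≠ j := fun h => hss (by rw [h])
  set g := SimpleGraph.fromRel fun a b => s a = s b with hg
  set g' := addE g i j with hg'
  have hb : benefit δ g' i ≤ ∑ v : Fin n,
      ((if v = j then δ else 0) + (if v ∈ Sset s i then δ else 0) +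
        (if v ∈ Sset s j then δ ^ 2 else 0)) := by
    apply benefit_le_sum
    intro v
    have hnn1 : (0:ℝ) ≤ if v = j then δ else 0 := by split_ifs <;> positivity
    have hnn2 : (0:ℝ) ≤ if v ∈ Sset s i then δ else 0 := by split_ifs <;> positivity
    have hnn3 : (0:ℝ) ≤ if v ∈ Sset s j then δ ^ 2 else 0 := by split_ifs <;> positivity
    by_cases hcond : v ≠ i ∧ g'.Reachable i v
    · obtain ⟨hvi, hreach⟩ := hcond
      rw [if_pos ⟨hvi, hreach⟩]
      have h0 : 0 < g'.dist i v := hreach.pos_dist_of_ne (fun h => hvi h.symm)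
      have hle1 : δ ^ g'.dist i v ≤ δ :=
        (pow_le_pow_of_le_one hδ0.le hδ1.le h0).trans_eq (pow_one δ)
      have hsv : s v = s i ∨ s v = s j :=
        hreach.elim fun w => addE_walk_prop s w (Or.inl rfl)
      by_cases hvj : v = j
      · have : (0:ℝ) ≤ δ := hδ0.le
        rw [if_pos hvj]; linarith
      · rcases hsv with hsv | hsv
        · have hmem : v ∈ Sset s i := (mem_Sset s).mpr ⟨hvi, hsv⟩
          rw [if_neg hvj, if_pos hmem]; linarith
        · have hmem : v ∈ Sset s j := (mem_Sset s).mpr ⟨hvj, hsv⟩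
          have hnadj : ¬ g'.Adj i v := by
            rw [hg', addE_adj s]
            rintro (⟨_, h2⟩ | ⟨_, ⟨_, h2⟩ | ⟨h1, _⟩⟩)
            · exact hss (h2.trans hsv)
            · exact hvj h2
            · exact hij h1
          have h1 : g'.dist i v ≠ 1 := fun h =>
            hnadj ((SimpleGraph.dist_eq_one_iff_adj).mp h)
          have h2 : 2 ≤ g'.dist i v := by omega
          have hle2 : δ ^ g'.dist i v ≤ δ ^ 2 :=
            pow_le_pow_of_le_one hδ0.le hδ1.le h2
          rw [if_neg hvj, if_pos hmem]
          have : (0:ℝ) ≤ if v ∈ Sset s i then δ else 0 := hnn2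
          linarith
    · rw [if_neg hcond]; linarith
  have hsum : (∑ v : Fin n,
      ((if v = j then δ else 0) + (if v ∈ Sset s i then δ else 0) +
        (if v ∈ Sset s j then δ ^ 2 else 0))) =
      δ + ((Sset s i).card : ℝ) * δ + ((Sset s j).card : ℝ) * δ ^ 2 := by
    rw [Finset.sum_add_distrib, Finset.sum_add_distrib,
      Finset.sum_ite_eq' Finset.univ j (fun _ => δ), if_pos (Finset.mem_univ j),
      Finset.sum_ite_mem, Finset.sum_ite_mem, Finset.univ_inter, Finset.univ_inter,
      Finset.sum_const, Finset.sum_const, nsmul_eq_mul, nsmul_eq_mul]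
  have hbg : benefit δ g i = ((Sset s i).card : ℝ) * δ := benefit_g s δ hδ0 i
  have hclcH : (0:ℝ) < cH - cL := by linarith
  have hcross' : π i j * (cH - cL) <
      cH - (δ + ((groupSize s (s j) : ℝ) - 1) * δ ^ 2) :=
    (lt_div_iff₀ hclcH).mp hcross
  have hgs : (groupSize s (s j) : ℝ) = ((Sset s j).card : ℝ) + 1 := by
    rw [groupSize_eq_S s j]; push_cast; ring
  unfold expGain
  rw [hbg]
  have hble := hb.trans_eq hsum
  rw [hgs] at hcross'
  nlinarith [hble]

/-- All agents share one hidden type but are partitioned into `K ≥ 2`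
social groups; `c_L ≤ δ - δ²`; same-group beliefs are above the meeting threshold
and cross-group beliefs are below the refusal threshold. Then the network formed
from the empty network -- the union of `K` complete components, one per social
group -- is pairwise stable under incomplete information (with all same-group pairs
acquainted), yet it is not efficient: the complete network (connecting all agents
of the single shared type) has strictly greater total utility. -/
theorem stmt7 {n K : ℕ} (hK : 2 ≤ K) (s : Fin n → Fin K)
    (hs : Function.Surjective s)
    (δ cL cH : ℝ) (π : Fin n → Fin n → ℝ)
    (hδ0 : 0 < δ) (hδ1 : δ < 1) (hcL : 0 < cL) (hc : cL < cH)
    (hL : cL ≤ δ - δ ^ 2)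
    (hπ : ∀ i j, π i j ∈ Set.Icc (0 : ℝ) 1)
    (hsame : ∀ i j, i ≠ j → s i = s j →
        (cH - (δ - δ ^ 2)) / (cH - cL) ≤ π i j)
    (hcross : ∀ i j, s i ≠ s j →
        π i j < (cH - (δ + ((groupSize s (s j) : ℝ) - 1) * δ ^ 2)) / (cH - cL)) :
    (∀ i j, (SimpleGraph.fromRel fun a b => s a = s b).Adj i j ↔ i ≠ j ∧ s i = s j) ∧
    incompletePS δ cL cH (fun _ => ()) π (fun i j => s i = s j)
      (SimpleGraph.fromRel fun a b => s a = s b) ∧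
    ∑ i, utility δ cL cH (fun _ => ())
        (SimpleGraph.fromRel fun a b => s a = s b) i <
      ∑ i, utility δ cL cH (fun _ => ()) (⊤ : SimpleGraph (Fin n)) i := by
  have hδcL : cL < δ := by nlinarith [sq_nonneg δ]
  refine ⟨fun i j => gAdj' s, ⟨?_, ?_, ?_⟩, ?_⟩
  · -- no profitable deletion
    intro i j hadj
    obtain ⟨hij, hsij⟩ := (gAdj' s).mp hadj
    have hjS : j ∈ Sset s i := (mem_Sset s).mpr ⟨fun h => hij h.symm, hsij.symm⟩
    have hcard : ((Sset s i).card : ℝ) = (((Sset s i).erase j).card : ℝ) + 1 := by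
      rw [← Finset.card_erase_add_one hjS]; push_cast; ring
    have h1 := utility_delE_le s δ cL cH hδ0 hδ1 hij hsij
    rw [utility_g s δ cL cH hδ0 i, hcard]
    have hsq : δ ^ 2 ≤ δ - cL := by nlinarith
    nlinarith
  · -- unacquainted pairs: cross-group, expected gain negative
    intro i j hij hnadj hM _
    have hss : s j ≠ s i := fun h => hM h.symm
    exact expGain_neg s δ cL cH π hδ0 hδ1 hc hss (hcross j i hss)
  · -- acquainted pairs: vacuous, since they are already linked
    intro i j hij hnadj hM _
    exact absurd ((gAdj' s).mpr ⟨hij, hM⟩) hnadj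
  · -- inefficiency
    have hle : ∀ i : Fin n,
        utility δ cL cH (fun _ => ()) (SimpleGraph.fromRel fun a b => s a = s b) i ≤
          utility δ cL cH (fun _ => ()) (⊤ : SimpleGraph (Fin n)) i := by
      intro i
      rw [utility_g s δ cL cH hδ0 i, utility_top]
      have hsub : Sset s i ⊆ Finset.univ.filter fun v => v ≠ i := by
        intro v hv
        simp only [Finset.mem_filter, Finset.mem_univ, true_and]
        exact ((mem_Sset s).mp hv).1
      have := Finset.card_le_card hsub
      have hpos : (0:ℝ) ≤ δ - cL := by linarith
      exact mul_le_mul_of_nonneg_right (by exact_mod_cast this) hpos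
    obtain ⟨a, ha⟩ := hs ⟨0, by omega⟩
    obtain ⟨b, hb⟩ := hs ⟨1, by omega⟩
    have hab : s a ≠ s b := by rw [ha, hb]; simp [Fin.ext_iff]
    have hstrict : utility δ cL cH (fun _ => ())
        (SimpleGraph.fromRel fun a' b' => s a' = s b') a <
          utility δ cL cH (fun _ => ()) (⊤ : SimpleGraph (Fin n)) a := by
      rw [utility_g s δ cL cH hδ0 a, utility_top]
      have hssub : Sset s a ⊂ Finset.univ.filter fun v => v ≠ a := by
        constructor
        · intro v hv
          simp only [Finset.mem_filter, Finset.mem_univ, true_and]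
          exact ((mem_Sset s).mp hv).1
        · intro hcon
          have hbmem : b ∈ Finset.univ.filter fun v => v ≠ a := by
            simp only [Finset.mem_filter, Finset.mem_univ, true_and]
            exact fun h => hab (by rw [h])
          have := (mem_Sset s).mp (hcon hbmem)
          exact hab this.2.symm
      have hcard := Finset.card_lt_card hssub
      have hpos : (0:ℝ) < δ - cL := by linarith
      exact mul_lt_mul_of_pos_right (by exact_mod_cast hcard) hpos
    exact Finset.sum_lt_sum (fun i _ => hle i) ⟨a, Finset.mem_univ a, hstrict⟩
end

section
/- Under the cost assumptions c_L ≤ δ - δ² and beliefs satisfying min{π_i(s_j), π_j(s_i)} ≥ (c_H - (δ - δ²))/(c_H - c_L) for all i,j, the set of pairwise stable networks under incomplete information is not contained in the set of pairwise stable networks under complete information: there exists a network with a singleton agent (types shared with others, cross-group beliefs sufficiently pessimistic and c_H sufficiently large) that is pairwise stable under incomplete information but not under complete information. -/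
open Finset

lemma addE_bot_adj {n : ℕ} (i j a b : Fin n) :
    (addE ⊥ i j).Adj a b ↔ s(a, b) = s(i, j) ∧ a ≠ b := by
  simp [addE, SimpleGraph.fromEdgeSet_adj]

lemma walk_addE_bot {n : ℕ} {i j a k : Fin n} (w : (addE ⊥ i j).Walk a k)
    (ha : a = i ∨ a = j) : k = i ∨ k = j := by
  induction w with
  | nil => exact ha
  | cons h p ih =>
    apply ih
    rw [addE_bot_adj] at h
    rcases Sym2.eq_iff.mp h.1 with ⟨_, hb⟩ | ⟨_, hb⟩
    · right; exact hb
    · left; exact hb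

lemma reach_addE_bot {n : ℕ} {i j k : Fin n} (h : (addE ⊥ i j).Reachable i k) :
    k = i ∨ k = j := by
  obtain ⟨w⟩ := h
  exact walk_addE_bot w (Or.inl rfl)

lemma benefit_bot {n : ℕ} (δ : ℝ) (i : Fin n) : benefit δ (⊥ : SimpleGraph (Fin n)) i = 0 := by
  unfold benefit
  apply Finset.sum_eq_zero
  intro k _
  simp [SimpleGraph.reachable_bot]
  tauto

lemma benefit_addE_bot {n : ℕ} (δ : ℝ) {i j : Fin n} (hij : i ≠ j) :
    benefit δ (addE (⊥ : SimpleGraph (Fin n)) i j) i = δ := by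
  unfold benefit
  have hadj : (addE (⊥ : SimpleGraph (Fin n)) i j).Adj i j := by
    rw [addE_bot_adj]; exact ⟨rfl, hij⟩
  rw [Finset.sum_eq_single j]
  · rw [if_pos ⟨hij.symm, hadj.reachable⟩, SimpleGraph.dist_eq_one_iff_adj.mpr hadj, pow_one]
  · intro k _ hk
    rw [if_neg]
    rintro ⟨hki, hr⟩
    rcases reach_addE_bot hr with h | h
    · exact hki h
    · exact hk h
  · intro h; exact absurd (Finset.mem_univ j) h

lemma utility_bot {n : ℕ} {T : Type} (δ cL cH : ℝ) (t : Fin n → T) (i : Fin n) :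
    utility δ cL cH t (⊥ : SimpleGraph (Fin n)) i = 0 := by
  unfold utility
  rw [benefit_bot]
  simp

lemma addE_bot_adj_left {n : ℕ} {i j : Fin n} (hij : i ≠ j) (k : Fin n) :
    (addE (⊥ : SimpleGraph (Fin n)) i j).Adj i k ↔ k = j := by
  rw [addE_bot_adj]
  constructor
  · rintro ⟨hs, hne⟩
    rcases Sym2.eq_iff.mp hs with ⟨_, hb⟩ | ⟨ha, hb⟩
    · exact hb
    · exact absurd ha hij
  · rintro rfl
    exact ⟨rfl, hij⟩

lemma utility_addE_bot {n : ℕ} {T : Type} (δ cL cH : ℝ) (t : Fin n → T)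
    {i j : Fin n} (hij : i ≠ j) (ht : t i = t j) :
    utility δ cL cH t (addE (⊥ : SimpleGraph (Fin n)) i j) i = δ - cL := by
  unfold utility
  rw [benefit_addE_bot δ hij]
  congr 1
  rw [Finset.sum_eq_single j]
  · rw [if_pos ((addE_bot_adj_left hij j).mpr rfl)]
    unfold cost
    rw [if_pos ht]
  · intro k _ hk
    rw [if_neg]
    rw [addE_bot_adj_left hij]
    exact hk
  · intro h; exact absurd (Finset.mem_univ j) h

lemma actualGain_bot {n : ℕ} {T : Type} (δ cL cH : ℝ) (t : Fin n → T)
    {i j : Fin n} (hij : i ≠ j) (ht : t i = t j) :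
    actualGain δ cL cH t (⊥ : SimpleGraph (Fin n)) i j = δ - cL := by
  unfold actualGain
  rw [utility_addE_bot δ cL cH t hij ht, utility_bot]
  ring

/-- With `c_L ≤ δ - δ²` and all (at least two) agents sharing one
hidden type, the set of pairwise stable networks under incomplete information is
not contained in that under complete information: for a sufficiently large `c_H`
and sufficiently pessimistic beliefs there is a network with a singleton agent
(whose type is shared by another agent, all pairs unacquainted with the singleton)
that is pairwise stable under incomplete information but not under complete
information. -/
theorem stmt15 {n : ℕ} (hn : 2 ≤ n) {T : Type} (t : Fin n → T)
    (hall : ∀ i j, t i = t j)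
    (δ cL : ℝ) (hδ0 : 0 < δ) (hδ1 : δ < 1) (hcL : 0 < cL)
    (hL : cL ≤ δ - δ ^ 2) :
    ∃ cH : ℝ, cL < cH ∧
      ∃ π : Fin n → Fin n → ℝ, (∀ i j, π i j ∈ Set.Icc (0 : ℝ) 1) ∧
        ∃ (g : SimpleGraph (Fin n)) (M : Fin n → Fin n → Prop) (i : Fin n),
          (∀ k, ¬ g.Adj i k) ∧
          (∃ j, j ≠ i ∧ t j = t i) ∧
          (∀ j, j ≠ i → ¬ M i j ∧ ¬ M j i) ∧
          incompletePS δ cL cH t π M g ∧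
          ¬ completePS δ cL cH t g := by
  
  refine ⟨δ + cL + 1, by linarith, fun _ _ => 0, fun i j => ⟨le_refl 0, zero_le_one⟩,
    ⊥, fun _ _ => False, ⟨0, by omega⟩, ?_, ?_, ?_, ?_, ?_⟩
  · intro k; simp
  · refine ⟨⟨1, by omega⟩, ?_, hall _ _⟩
    intro h
    have := Fin.mk.injEq 1 (by omega : (1:ℕ) < n) 0 (by omega : (0:ℕ) < n) ▸ congrArg Fin.val h
    simp at this
  · intro j _; exact ⟨id, id⟩
  · refine ⟨?_, ?_, ?_⟩
    · intro i j h; exact absurd h (by simp)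
    · intro i j hij _ _ hge
      exfalso
      have hexp : expGain δ cL (δ + cL + 1) (fun _ _ => (0:ℝ)) ⊥ i j = δ - (δ + cL + 1) := by
        unfold expGain
        rw [benefit_addE_bot δ hij, benefit_bot]
        ring
      rw [hexp] at hge
      linarith
    · intro i j _ _ h; exact absurd h id
  · intro ⟨_, h2⟩
    have hij : (⟨0, by omega⟩ : Fin n) ≠ ⟨1, by omega⟩ := by
      intro h
      have := congrArg Fin.val h
      simp at this
    have h1 := h2 ⟨0, by omega⟩ ⟨1, by omega⟩ hij (by simp)
    rw [actualGain_bot δ cL (δ + cL + 1) t hij (hall _ _),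
        actualGain_bot δ cL (δ + cL + 1) t hij.symm (hall _ _)] at h1
    have hδ2 : (0:ℝ) ≤ δ ^ 2 := sq_nonneg δ
    have := h1 (by linarith)
    linarith
end
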